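/- Let G = (V, A, c) be a finite weighted directed graph with no negative cycles and let B > 0. Then for every s–t path P there exists a simple s–t path P' (a path with no repeated vertices) such that d_B(P') ≤ d_B(P). -/

import Mathlib

open scoped Classical

/-- The clamped addition `x ⊕_B y = [x + y]₀ᴮ` on `ℝ ∪ {∞}` (modeled inside `EReal`;
inputs are never `⊥`). -/
noncomputable def eplus (B : ℝ) (x y : EReal) : EReal :=
  if x + y < 0 then 0 else if x + y ≤ (B : EReal) then x + y else ⊤

/-- `batt B b cst i` is the charge `b_i` of the battery after traversing the first `i`
arcs of a path whose `i`-th arc (0-indexed) has cost `cst i`, starting from charge `b`. -/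
noncomputable def batt (B b : ℝ) (cst : ℕ → ℝ) : ℕ → ℝ
  | 0 => b
  | i + 1 => min (batt B b cst i - cst i) B

/-- The path with arc costs `cst 0, …, cst (k-1)` is traversable from initial charge `b`. -/
def Trav (B b : ℝ) (cst : ℕ → ℝ) (k : ℕ) : Prop :=
  ∀ i, i < k → cst i ≤ batt B b cst i

/-- The energetic cost `d_{B,b}(P) = b - b_k` of a path with arc costs
`cst 0, …, cst (k-1)`, or `∞` if not traversable from initial charge `b`. -/
noncomputable def dE (B b : ℝ) (cst : ℕ → ℝ) (k : ℕ) : EReal :=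
  if Trav B b cst k then ((b - batt B b cst k : ℝ) : EReal) else ⊤

/-- `u 0, u 1, …, u k` is a path in the graph with arc relation `Arc`. -/
def IsPath {V : Type*} (Arc : V → V → Prop) (u : ℕ → V) (k : ℕ) : Prop :=
  ∀ i, i < k → Arc (u i) (u (i + 1))

/-- The energetic cost `δ_{B,b}(s,t)`: the minimum of `d_{B,b}(P)` over all `s`–`t`
paths `P` (`∞` if there is none). -/
noncomputable def deltaE {V : Type*} (Arc : V → V → Prop) (c : V → V → ℝ)
    (B b : ℝ) (s t : V) : EReal :=
  sInf { x : EReal | ∃ (u : ℕ → V) (k : ℕ), IsPath Arc u k ∧ u 0 = s ∧ u k = t ∧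
    x = dE B b (fun i => c (u i) (u (i + 1))) k }

/-- The standard distance `δ(s,t)`: the infimum of total costs of `s`–`t` paths. -/
noncomputable def distE {V : Type*} (Arc : V → V → Prop) (c : V → V → ℝ)
    (s t : V) : EReal :=
  sInf { x : EReal | ∃ (u : ℕ → V) (k : ℕ), IsPath Arc u k ∧ u 0 = s ∧ u k = t ∧
    x = ((∑ i ∈ Finset.range k, c (u i) (u (i + 1)) : ℝ) : EReal) }

/-- The graph has no negative cycles. -/
def NoNegCycles {V : Type*} (Arc : V → V → Prop) (c : V → V → ℝ) : Prop :=
  ∀ (u : ℕ → V) (k : ℕ), IsPath Arc u k → u k = u 0 → 1 ≤ k →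
    0 ≤ ∑ i ∈ Finset.range k, c (u i) (u (i + 1))

/-!
Cutting a cycle out of a path never increases its energetic cost. If the battery holds `b₁`
when the cycle starts, it holds at most `b₁ - (cost of the cycle) ≤ b₁` when the cycle ends,
because the clamp at `B` only ever lowers the charge; and the charge along the remaining suffix
is monotone in the charge it starts with. A shortest `s`–`t` path whose energetic cost is at most
`d_B(P)` therefore repeats no vertex.
-/

section Battery

variable {B b b' : ℝ} {cst cst' : ℕ → ℝ}

lemma batt_congr {n : ℕ} (h : ∀ m < n, cst m = cst' m) :
    batt B b cst n = batt B b cst' n := by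
  induction n with
  | zero => rfl
  | succ n ih =>
    simp only [batt, ih fun m hm => h m (hm.trans n.lt_succ_self), h n n.lt_succ_self]

lemma batt_mono (hb : b ≤ b') (n : ℕ) : batt B b cst n ≤ batt B b' cst n := by
  induction n with
  | zero => exact hb
  | succ n ih => exact min_le_min (by linarith) le_rfl

lemma batt_le_sub_sum (n : ℕ) : batt B b cst n ≤ b - ∑ m ∈ Finset.range n, cst m := by
  induction n with
  | zero => simp [batt]
  | succ n ih =>
    rw [Finset.sum_range_succ, batt]
    linarith [min_le_left (batt B b cst n - cst n) B]

lemma batt_add (a n : ℕ) :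
    batt B b cst (a + n) = batt B (batt B b cst a) (fun m => cst (a + m)) n := by
  induction n with
  | zero => rfl
  | succ n ih => rw [← Nat.add_assoc, batt, batt, ih]

lemma trav_congr {n : ℕ} (h : ∀ m < n, cst m = cst' m) : Trav B b cst n ↔ Trav B b cst' n := by
  refine forall₂_congr fun i hi => ?_
  rw [h i hi, batt_congr fun m hm => h m (hm.trans hi)]

lemma Trav.mono {n : ℕ} (hb : b ≤ b') (h : Trav B b cst n) : Trav B b' cst n :=
  fun i hi => (h i hi).trans (batt_mono hb i)

lemma trav_add (a n : ℕ) :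
    Trav B b cst (a + n) ↔
      Trav B b cst a ∧ Trav B (batt B b cst a) (fun m => cst (a + m)) n := by
  constructor
  · intro h
    refine ⟨fun i hi => h i (by omega), fun m hm => ?_⟩
    rw [← batt_add]
    exact h (a + m) (by omega)
  · rintro ⟨hpre, hsuf⟩ i hi
    rcases lt_or_ge i a with hia | hia
    · exact hpre i hia
    · obtain ⟨m, rfl⟩ := Nat.exists_eq_add_of_le hia
      rw [batt_add]
      exact hsuf m (by omega)

theorem dE_le_of_skip {i d : ℕ} (hpre : ∀ m < i, cst' m = cst m)
    (hsuf : ∀ m, cst' (i + m) = cst (i + d + m))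
    (hblock : 0 ≤ ∑ m ∈ Finset.range d, cst (i + m)) (r : ℕ) :
    dE B b cst' (i + r) ≤ dE B b cst (i + d + r) := by
  set b₁ := batt B b cst i
  have hb₂ : batt B b cst (i + d) ≤ b₁ := by
    rw [batt_add]
    linarith [batt_le_sub_sum (B := B) (b := b₁) (cst := fun m => cst (i + m)) d]
  have hstart : batt B b cst' i = b₁ := batt_congr hpre
  have hshift : (fun m => cst' (i + m)) = fun m => cst (i + d + m) := funext hsuf
  unfold dE
  split_ifs with hT' hT hT
  · rw [EReal.coe_le_coe_iff, batt_add, batt_add (i + d), hstart, hshift]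
    linarith [batt_mono hb₂ r (B := B) (cst := fun m => cst (i + d + m))]
  · exact le_top
  · refine absurd ?_ hT'
    rw [trav_add] at hT ⊢
    rw [trav_congr hpre, hstart, hshift]
    exact ⟨((trav_add i d).1 hT.1).1, hT.2.mono hb₂⟩
  · exact le_rfl

end Battery

section Paths

variable {V : Type*} {Arc : V → V → Prop} {c : V → V → ℝ} {u : ℕ → V} {i d r : ℕ}

def dropSegment (u : ℕ → V) (i d : ℕ) : ℕ → V :=
  fun n => if n < i then u n else u (n + d)

lemma dropSegment_of_le {n : ℕ} (h : i ≤ n) : dropSegment u i d n = u (n + d) :=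
  if_neg (not_lt.2 h)

lemma dropSegment_of_le_of_cycle (hcyc : u (i + d) = u i) {n : ℕ} (h : n ≤ i) :
    dropSegment u i d n = u n := by
  rcases h.lt_or_eq with h | rfl
  · exact if_pos h
  · rw [dropSegment_of_le le_rfl, hcyc]

lemma IsPath.dropSegment (hP : IsPath Arc u (i + d + r)) (hcyc : u (i + d) = u i) :
    IsPath Arc (dropSegment u i d) (i + r) := by
  intro n hn
  rcases lt_or_ge n i with h | h
  · rw [dropSegment_of_le_of_cycle hcyc h.le, dropSegment_of_le_of_cycle hcyc h]
    exact hP n (by omega)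
  · rw [dropSegment_of_le h, dropSegment_of_le (by omega), Nat.add_right_comm]
    exact hP (n + d) (by omega)

lemma NoNegCycles.sum_nonneg (hNC : NoNegCycles Arc c) (hP : IsPath Arc u (i + d + r))
    (hcyc : u (i + d) = u i) (hd : 0 < d) :
    0 ≤ ∑ m ∈ Finset.range d, c (u (i + m)) (u (i + m + 1)) :=
  hNC (fun m => u (i + m)) d (fun m hm => hP (i + m) (by omega)) hcyc hd

lemma dE_dropSegment_le (hNC : NoNegCycles Arc c) (hP : IsPath Arc u (i + d + r))
    (hcyc : u (i + d) = u i) (hd : 0 < d) (B b : ℝ) :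
    dE B b (fun n => c (dropSegment u i d n) (dropSegment u i d (n + 1))) (i + r) ≤
      dE B b (fun n => c (u n) (u (n + 1))) (i + d + r) := by
  refine dE_le_of_skip (fun m hm => ?_) (fun m => ?_) (hNC.sum_nonneg hP hcyc hd) r
  · rw [dropSegment_of_le_of_cycle hcyc hm.le, dropSegment_of_le_of_cycle hcyc hm]
  · rw [dropSegment_of_le (by omega), dropSegment_of_le (by omega)]
    congr 2 <;> omega

lemma exists_shorter_path_of_repeat (hNC : NoNegCycles Arc c) {n : ℕ} (hP : IsPath Arc u n)
    (hrep : ¬ ∀ i ≤ n, ∀ j ≤ n, u i = u j → i = j) (B b : ℝ) :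
    ∃ (u' : ℕ → V) (n' : ℕ), n' < n ∧ IsPath Arc u' n' ∧ u' 0 = u 0 ∧ u' n' = u n ∧
      dE B b (fun m => c (u' m) (u' (m + 1))) n' ≤ dE B b (fun m => c (u m) (u (m + 1))) n := by
  obtain ⟨i, d, r, hd, rfl, hcyc⟩ : ∃ i d r, 0 < d ∧ i + d + r = n ∧ u (i + d) = u i := by
    push Not at hrep
    obtain ⟨j, hj, j', hj', heq, hne⟩ := hrep
    rcases hne.lt_or_gt with h | h
    · exact ⟨j, j' - j, n - j', by omega, by omega, by rw [Nat.add_sub_cancel' h.le, heq]⟩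
    · exact ⟨j', j - j', n - j, by omega, by omega, by rw [Nat.add_sub_cancel' h.le, heq]⟩
  refine ⟨dropSegment u i d, i + r, by omega, hP.dropSegment hcyc,
    dropSegment_of_le_of_cycle hcyc (Nat.zero_le i), ?_, dE_dropSegment_le hNC hP hcyc hd B b⟩
  rw [dropSegment_of_le (by omega), Nat.add_right_comm]

end Paths

theorem exists_simple_path_le_general {V : Type*} (Arc : V → V → Prop)
    (c : V → V → ℝ) (hNC : NoNegCycles Arc c) (B : ℝ) (s t : V)
    (u : ℕ → V) (k : ℕ) (hP : IsPath Arc u k) (hs : u 0 = s) (ht : u k = t) :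
    ∃ (u' : ℕ → V) (k' : ℕ), IsPath Arc u' k' ∧ u' 0 = s ∧ u' k' = t ∧
      (∀ i ≤ k', ∀ j ≤ k', u' i = u' j → i = j) ∧
      dE B B (fun i => c (u' i) (u' (i + 1))) k' ≤
        dE B B (fun i => c (u i) (u (i + 1))) k := by
  have hex : ∃ n, ∃ u' : ℕ → V, IsPath Arc u' n ∧ u' 0 = s ∧ u' n = t ∧
      dE B B (fun i => c (u' i) (u' (i + 1))) n ≤ dE B B (fun i => c (u i) (u (i + 1))) k :=
    ⟨k, u, hP, hs, ht, le_rfl⟩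
  obtain ⟨u', hP', hs', ht', hle⟩ := Nat.find_spec hex
  refine ⟨u', Nat.find hex, hP', hs', ht', ?_, hle⟩
  by_contra hrep
  obtain ⟨u'', n, hlt, hP'', hs'', ht'', hle''⟩ := exists_shorter_path_of_repeat hNC hP' hrep B B
  exact Nat.find_min hex hlt ⟨u'', hP'', hs''.trans hs', ht''.trans ht', hle''.trans hle⟩

/-- in a finite graph with no negative cycles, for every `s`–`t` path `P`
there is a simple `s`–`t` path `P'` with `d_B(P') ≤ d_B(P)`. -/
theorem exists_simple_path_le {V : Type*} [Fintype V] (Arc : V → V → Prop)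
    (c : V → V → ℝ) (hNC : NoNegCycles Arc c) (B : ℝ) (hB : 0 < B) (s t : V)
    (u : ℕ → V) (k : ℕ) (hP : IsPath Arc u k) (hs : u 0 = s) (ht : u k = t) :
    ∃ (u' : ℕ → V) (k' : ℕ), IsPath Arc u' k' ∧ u' 0 = s ∧ u' k' = t ∧
      (∀ i ≤ k', ∀ j ≤ k', u' i = u' j → i = j) ∧
      dE B B (fun i => c (u' i) (u' (i + 1))) k' ≤
        dE B B (fun i => c (u i) (u (i + 1))) k :=
  exists_simple_path_le_general Arc c hNC B s t u k hP hs ht
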